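/- With the uncertainty u(G) = -log(det(L̂(G))^{n-1} · det(Π)^6) as written in equation (9) of the paper, where n = |V(G)| and Π is 6×6 positive definite with det(Π) ≥ 1 and det(L̂(G)) ≥ 2 (G connected and not a tree): if G' is obtained from G by adding a vertex with at least two edges to existing vertices and G' is connected, then u(G') < u(G). -/

import Mathlib

open Matrix

/-- The reduced Laplacian: the Laplacian matrix with the row and column of `v0` deleted. -/
noncomputable def reducedLap {V : Type*} [Fintype V] [DecidableEq V]
    (G : SimpleGraph V) [DecidableRel G.Adj] (v0 : V) :
    Matrix {u : V // u ≠ v0} {u : V // u ≠ v0} ℝ :=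
  (G.lapMatrix ℝ).submatrix Subtype.val Subtype.val

/-- The uncertainty as written in equation (9) of the paper:
`u(G) = -log(det(L̂(G))^(n-1) · det(Π)^6)` with `n = |V(G)|`. -/
noncomputable def uncert9 {V : Type*} [Fintype V] [DecidableEq V]
    (G : SimpleGraph V) [DecidableRel G.Adj] (v0 : V) (Pi : Matrix (Fin 6) (Fin 6) ℝ) : ℝ :=
  -Real.log ((reducedLap G v0).det ^ (Fintype.card V - 1) * Pi.det ^ 6)

lemma myaux_one_le_det_one_add {n : Type*} [Fintype n] [DecidableEq n]
    {P : Matrix n n ℝ} (hP : P.PosSemidef) : 1 ≤ (1 + P).det := by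
  have hH : (1 + P).IsHermitian := Matrix.isHermitian_one.add hP.1
  have key : ∀ i, 1 ≤ hH.eigenvalues i := by
    intro i
    have hv := hH.mulVec_eigenvectorBasis i
    set v : n → ℝ := ⇑(hH.eigenvectorBasis i) with hvdef
    have hnorm : star v ⬝ᵥ v = 1 := by
      have h1 := hH.eigenvectorBasis.orthonormal.1 i
      have hie := EuclideanSpace.inner_eq_star_dotProduct (hH.eigenvectorBasis i) (hH.eigenvectorBasis i)
      rw [star_trivial] at hie ⊢
      rw [hvdef, ← hie]
      simp [inner_self_eq_norm_sq_to_K, h1]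
    have h0 : (0:ℝ) ≤ star v ⬝ᵥ (P *ᵥ v) := hP.dotProduct_mulVec_nonneg v
    have hPv : P *ᵥ v = (hH.eigenvalues i) • v - v := by
      have h2 : (1 + P) *ᵥ v = v + P *ᵥ v := by
        rw [add_mulVec, one_mulVec]
      rw [h2] at hv
      linear_combination (norm := module) hv
    rw [hPv, dotProduct_sub, dotProduct_smul, hnorm] at h0
    simp at h0
    linarith
  rw [hH.det_eq_prod_eigenvalues]
  simp only [RCLike.ofReal_real_eq_id, id_eq]
  calc (1:ℝ) = ∏ _i : n, (1:ℝ) := by simp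
    _ ≤ ∏ i, hH.eigenvalues i :=
        Finset.prod_le_prod (fun i _ => zero_le_one) (fun i _ => key i)

open scoped MatrixOrder in
lemma myaux_det_le_det_add {n : Type*} [Fintype n] [DecidableEq n]
    {M R : Matrix n n ℝ} (hM : M.PosSemidef) (hMdet : M.det ≠ 0)
    (hR : R.PosSemidef) : M.det ≤ (M + R).det := by
  set S := CFC.sqrt M with hSdef
  have hSps : S.PosSemidef := (CFC.sqrt_nonneg M).posSemidef
  have hSS : S * S = M := CFC.sqrt_mul_sqrt_self M hM.nonneg
  have hSdet : S.det ≠ 0 := by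
    intro h
    apply hMdet
    rw [← hSS, det_mul, h, mul_zero]
  have hSunit : IsUnit S.det := isUnit_iff_ne_zero.mpr hSdet
  have hSinv : S * S⁻¹ = 1 := mul_nonsing_inv S hSunit
  have hSinv' : S⁻¹ * S = 1 := nonsing_inv_mul S hSunit
  have hfact : M + R = S * (1 + S⁻¹ * R * S⁻¹) * S := by
    rw [mul_add, add_mul, mul_one, hSS]
    congr 1
    symm
    calc S * (S⁻¹ * R * S⁻¹) * S = (S * S⁻¹) * R * (S⁻¹ * S) := by
          simp only [Matrix.mul_assoc]
      _ = R := by rw [hSinv, hSinv', Matrix.one_mul, Matrix.mul_one]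
  have hPsd : (S⁻¹ * R * S⁻¹).PosSemidef := by
    have hco : (S⁻¹)ᴴ = S⁻¹ := by
      rw [conjTranspose_nonsing_inv, hSps.1.eq]
    have := hR.conjTranspose_mul_mul_same (S⁻¹)
    rwa [hco] at this
  have h1 : 1 ≤ (1 + S⁻¹ * R * S⁻¹).det := myaux_one_le_det_one_add hPsd
  have hMdet' : S.det * S.det = M.det := by rw [← det_mul, hSS]
  have hMpos : 0 < M.det := by
    rcases lt_or_eq_of_le (by nlinarith [sq_nonneg S.det] : (0:ℝ) ≤ M.det) with h | h
    · exact h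
    · exact absurd h.symm hMdet
  rw [hfact, det_mul, det_mul]
  calc M.det = M.det * 1 := by ring
    _ ≤ M.det * (1 + S⁻¹ * R * S⁻¹).det := by
        exact mul_le_mul_of_nonneg_left h1 (le_of_lt hMpos)
    _ = S.det * (1 + S⁻¹ * R * S⁻¹).det * S.det := by rw [← hMdet']; ring

/-- If `G` is connected with `det(L̂(G)) ≥ 2` (i.e. not a tree) and `G'` is a connected graph
obtained from `G` by adding a new vertex joined by at least two edges to existing vertices,
then `u(G') < u(G)` for the uncertainty of equation (9). -/
theorem stmt17 {V : Type*} [Fintype V] [DecidableEq V]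
    (G : SimpleGraph V) [DecidableRel G.Adj]
    (G' : SimpleGraph (Option V)) [DecidableRel G'.Adj]
    (hconn : G.Connected) (hconn' : G'.Connected)
    (v0 : V) (hdet2 : (2 : ℝ) ≤ (reducedLap G v0).det)
    (S : Finset V) (hS : 2 ≤ S.card)
    (hG'some : ∀ a b : V, G'.Adj (some a) (some b) ↔ G.Adj a b)
    (hG'new : ∀ a : V, G'.Adj none (some a) ↔ a ∈ S)
    (Pi : Matrix (Fin 6) (Fin 6) ℝ) (hPi : Pi.PosDef) (hPidet : 1 ≤ Pi.det) :
    uncert9 G' (some v0) Pi < uncert9 G v0 Pi := by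
  classical
  set M : Matrix {u : V // u ≠ v0} {u : V // u ≠ v0} ℝ := reducedLap G v0 with hMdef
  set c : ℝ := (S.card : ℝ) with hcdef
  have hc2 : (2:ℝ) ≤ c := by rw [hcdef]; exact_mod_cast hS
  have hcpos : (0:ℝ) < c := by linarith
  set w : {u : V // u ≠ v0} → ℝ := fun u => if (u : V) ∈ S then 1 else 0 with hwdef
  -- adjacency symmetric form
  have hadj_symm : ∀ a : V, G'.Adj (some a) none ↔ a ∈ S := by
    intro a; rw [SimpleGraph.adj_comm]; exact hG'new a
  -- degrees
  have hdeg_some : ∀ a : V, (G'.degree (some a) : ℝ)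
      = (G.degree a : ℝ) + (if a ∈ S then 1 else 0) := by
    intro a
    have h1 := SimpleGraph.degree_eq_sum_if_adj (R := ℝ) (G := G') (some a)
    have h2 := SimpleGraph.degree_eq_sum_if_adj (R := ℝ) (G := G) a
    rw [h1, h2, Fintype.sum_option]
    simp only [hadj_symm, hG'some]
    ring
  have hdeg_none : (G'.degree none : ℝ) = c := by
    rw [SimpleGraph.degree_eq_sum_if_adj, Fintype.sum_option]
    simp only [hG'new, SimpleGraph.irrefl, if_false]
    rw [Finset.sum_boole]
    simp [hcdef, Finset.filter_mem_eq_inter]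
  -- the equivalence
  let e : ({u : V // u ≠ v0} ⊕ Unit) ≃ {x : Option V // x ≠ some v0} :=
    { toFun := fun x => match x with
        | Sum.inl u => ⟨some u.1, by simpa using u.2⟩
        | Sum.inr _ => ⟨none, by simp⟩
      invFun := fun x => match x with
        | ⟨some u, h⟩ => Sum.inl ⟨u, by simpa using h⟩
        | ⟨none, _⟩ => Sum.inr ()
      left_inv := by rintro (⟨u, hu⟩ | ⟨⟩) <;> rfl
      right_inv := by rintro ⟨(u | _), h⟩ <;> rfl }
  -- blocks
  set B : Matrix {u : V // u ≠ v0} Unit ℝ := Matrix.of fun u _ => -w u with hBdef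
  set C : Matrix Unit {u : V // u ≠ v0} ℝ := Matrix.of fun _ u => -w u with hCdef
  set D : Matrix Unit Unit ℝ := Matrix.diagonal (fun _ => c) with hDdef
  have hlap : ∀ x y : Option V, G'.lapMatrix ℝ x y
      = (if x = y then (G'.degree x : ℝ) else 0) - (if G'.Adj x y then 1 else 0) := by
    intro x y
    simp [SimpleGraph.lapMatrix, SimpleGraph.degMatrix, Matrix.sub_apply,
      Matrix.diagonal_apply]
  have hlapG : ∀ x y : V, G.lapMatrix ℝ x y
      = (if x = y then (G.degree x : ℝ) else 0) - (if G.Adj x y then 1 else 0) := by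
    intro x y
    simp [SimpleGraph.lapMatrix, SimpleGraph.degMatrix, Matrix.sub_apply,
      Matrix.diagonal_apply]
  have hblock : (reducedLap G' (some v0)).submatrix e e
      = Matrix.fromBlocks (M + Matrix.diagonal w) B C D := by
    ext i j
    cases i with
    | inl u =>
      cases j with
      | inl v =>
        show G'.lapMatrix ℝ (some u.1) (some v.1) = _
        rw [hlap]
        by_cases huv : u = v
        · subst huv
          simp only [Matrix.fromBlocks_apply₁₁, Matrix.add_apply, Matrix.diagonal_apply_eq,
            if_pos rfl, hMdef, reducedLap, Matrix.submatrix_apply]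
          rw [hlapG, hdeg_some]
          simp [SimpleGraph.irrefl, hwdef]
        · have hne : (u : V) ≠ (v : V) := fun h => huv (Subtype.ext h)
          have hne' : (some u.1 : Option V) ≠ some v.1 := by simpa using hne
          simp only [Matrix.fromBlocks_apply₁₁, Matrix.add_apply,
            Matrix.diagonal_apply_ne _ huv, hMdef, reducedLap, Matrix.submatrix_apply]
          rw [hlapG]
          simp [hne, hne', hG'some]
      | inr _ =>
        show G'.lapMatrix ℝ (some u.1) none = _
        rw [hlap]
        simp [hadj_symm, hBdef, hwdef]
    | inr _ =>
      cases j with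
      | inl v =>
        show G'.lapMatrix ℝ none (some v.1) = _
        rw [hlap]
        simp [hG'new, hCdef, hwdef]
      | inr _ =>
        show G'.lapMatrix ℝ none none = _
        rw [hlap]
        simp [hdeg_none, hDdef, SimpleGraph.irrefl]
  have hDinv : Invertible D := by
    apply Matrix.invertibleOfIsUnitDet
    rw [hDdef, Matrix.det_diagonal]
    simp [isUnit_iff_ne_zero, ne_of_gt hcpos]
  have hinvD : ⅟D = Matrix.diagonal (fun _ : Unit => c⁻¹) := by
    apply invOf_eq_right_inv
    rw [hDdef, Matrix.diagonal_mul_diagonal]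
    simp [mul_inv_cancel₀ (ne_of_gt hcpos)]
  set R : Matrix {u : V // u ≠ v0} {u : V // u ≠ v0} ℝ :=
    Matrix.diagonal w - c⁻¹ • Matrix.vecMulVec w w with hRdef
  have hBDC : B * ⅟D * C = c⁻¹ • Matrix.vecMulVec w w := by
    rw [hinvD]
    ext u v
    simp [hBdef, hCdef, Matrix.mul_apply, Matrix.vecMulVec_apply, Matrix.smul_apply]
    ring
  have hdet' : (reducedLap G' (some v0)).det = c * (M + R).det := by
    rw [← det_submatrix_equiv_self e, hblock, Matrix.det_fromBlocks₂₂]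
    congr 1
    · rw [hDdef, Matrix.det_diagonal]; simp
    · rw [hBDC, hRdef]
      congr 1
      rw [add_sub_assoc]
  -- R is PSD
  have hRps : R.PosSemidef := by
    rw [Matrix.posSemidef_iff_dotProduct_mulVec]
    constructor
    · have h1 : (Matrix.vecMulVec w w).IsHermitian := by
        ext i j
        simp [Matrix.conjTranspose_apply, Matrix.vecMulVec_apply, mul_comm]
      have h2 : (c⁻¹ • Matrix.vecMulVec w w).IsHermitian := by
        ext i j
        simp only [Matrix.conjTranspose_apply, Matrix.smul_apply, star_trivial,
          smul_eq_mul, Matrix.vecMulVec_apply]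
        ring
      exact (Matrix.isHermitian_diagonal w).sub h2
    · intro x
      simp only [star_trivial, hRdef, Matrix.sub_mulVec, dotProduct_sub,
        Matrix.smul_mulVec, dotProduct_smul, smul_eq_mul]
      set T : Finset {u : V // u ≠ v0} := Finset.univ.filter (fun u => (u : V) ∈ S) with hTdef
      have hsum1 : x ⬝ᵥ (Matrix.diagonal w *ᵥ x) = ∑ u ∈ T, x u ^ 2 := by
        rw [hTdef, Finset.sum_filter]
        simp only [dotProduct, Matrix.mulVec_diagonal, hwdef]
        apply Finset.sum_congr rfl
        intro u _
        by_cases hu : (u : V) ∈ S <;> simp [hu] <;> ring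
      have hsum2 : x ⬝ᵥ (Matrix.vecMulVec w w *ᵥ x) = (∑ u ∈ T, x u) ^ 2 := by
        have hvm : ∀ i, (Matrix.vecMulVec w w *ᵥ x) i = w i * (∑ u ∈ T, x u) := by
          intro i
          simp only [Matrix.mulVec, Matrix.vecMulVec_apply, dotProduct]
          rw [hTdef, Finset.sum_filter, Finset.mul_sum]
          apply Finset.sum_congr rfl
          intro u _
          by_cases hu : (u : V) ∈ S <;> simp [hwdef, hu]
        simp only [dotProduct, hvm]
        rw [hTdef]
        rw [Finset.sum_filter, sq, Finset.sum_mul]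
        apply Finset.sum_congr rfl
        intro u _
        by_cases hu : (u : V) ∈ S <;> simp [hwdef, hu] <;> ring
      rw [hsum1, hsum2]
      have hQ : (0:ℝ) ≤ ∑ u ∈ T, x u ^ 2 :=
        Finset.sum_nonneg fun u _ => sq_nonneg _
      have hcauchy : (∑ u ∈ T, x u) ^ 2 ≤ (T.card : ℝ) * ∑ u ∈ T, x u ^ 2 := by
        exact_mod_cast sq_sum_le_card_mul_sum_sq (s := T) (f := x)
      have hcard : (T.card : ℝ) ≤ c := by
        rw [hcdef]
        have hTS : T.card ≤ S.card := by
          refine Finset.card_le_card_of_injOn (fun u => (u : V)) ?_ ?_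
          · intro u hu
            rw [hTdef] at hu
            exact (Finset.mem_filter.mp hu).2
          · intro a _ b _ hab
            exact Subtype.ext hab
        exact_mod_cast hTS
      have h3 : (∑ u ∈ T, x u) ^ 2 ≤ c * ∑ u ∈ T, x u ^ 2 :=
        le_trans hcauchy (mul_le_mul_of_nonneg_right hcard hQ)
      have h4 : c⁻¹ * (∑ u ∈ T, x u) ^ 2 ≤ ∑ u ∈ T, x u ^ 2 := by
        rw [← mul_le_mul_iff_right₀ hcpos, ← mul_assoc, mul_inv_cancel₀ (ne_of_gt hcpos), one_mul]
        exact h3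
      linarith
  -- M is PSD with nonzero det
  have hMps : M.PosSemidef := (SimpleGraph.posSemidef_lapMatrix ℝ G).submatrix Subtype.val
  have hMdetpos : (0:ℝ) < M.det := by linarith
  have hMdetne : M.det ≠ 0 := ne_of_gt hMdetpos
  have hle : M.det ≤ (M + R).det := myaux_det_le_det_add hMps hMdetne hRps
  have hge : (2:ℝ) * M.det ≤ (reducedLap G' (some v0)).det := by
    rw [hdet']
    nlinarith
  -- numeric conclusion
  set d : ℝ := M.det with hddef
  set d' : ℝ := (reducedLap G' (some v0)).det with hd'def
  have hd2 : (2:ℝ) ≤ d := hdet2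
  have hd'4 : (4:ℝ) ≤ d' := by nlinarith
  set n : ℕ := Fintype.card V with hndef
  have hn1 : 1 ≤ n := Fintype.card_pos_iff.mpr ⟨v0⟩
  have hp : (1:ℝ) ≤ Pi.det ^ 6 := one_le_pow₀ hPidet
  have hppos : (0:ℝ) < Pi.det ^ 6 := lt_of_lt_of_le one_pos hp
  have hexp : Fintype.card (Option V) - 1 = n := by
    rw [Fintype.card_option]
    exact Nat.add_sub_cancel _ _
  have hpow : d ^ (n - 1) < d' ^ n := by
    have hdd' : d ≤ d' := by linarith
    have hdnn : (0:ℝ) ≤ d := by linarith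
    have h5 : d ^ (n-1) ≤ d' ^ (n-1) := pow_le_pow_left₀ hdnn hdd' _
    have h6 : (0:ℝ) < d ^ (n-1) := pow_pos (by linarith) _
    calc d ^ (n-1) = d ^ (n-1) * 1 := by ring
      _ < d ^ (n-1) * d' := by
          apply mul_lt_mul_of_pos_left _ h6
          linarith
      _ ≤ d' ^ (n-1) * d' := by
          apply mul_le_mul_of_nonneg_right h5
          linarith
      _ = d' ^ n := by
          rw [← pow_succ]
          congr 1
          omega
  have hmain : d ^ (n-1) * Pi.det ^ 6 < d' ^ n * Pi.det ^ 6 :=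
    mul_lt_mul_of_pos_right hpow hppos
  have hposL : (0:ℝ) < d ^ (n-1) * Pi.det ^ 6 := by positivity
  rw [uncert9, uncert9, hexp]
  apply neg_lt_neg
  exact Real.log_lt_log hposL hmain
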